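/- Let ϑ_P = (ϑ, P) be a primitive random substitution over an alphabet A such that |ϑ(a)| (the common length of words in ϑ(a)) is well-defined for all a ∈ A. If ϑ_P is recognisable, then it satisfies the disjoint set condition. -/

import Mathlib

open Filter MeasureTheory

namespace RandomSubstitutionTheory

variable {A : Type*} [Fintype A] [DecidableEq A]

/-- The set of realisations of `ϑ(u)` for a word `u`. -/
def reals (θ : A → Finset (List A)) : List A → Finset (List A)
  | [] => {[]}
  | a :: u => (θ a).biUnion fun v => (reals θ u).image fun w => v ++ w

/-- The set of realisations of `ϑ^n(u)` for a word `u`. -/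
def realsIter (θ : A → Finset (List A)) : ℕ → List A → Finset (List A)
  | 0, u => {u}
  | n + 1, u => (reals θ u).biUnion fun v => realsIter θ n v

/-- `wordProb θ P u w` is the probability `P[ϑ_P(u) = w]`, each letter of `u` being
substituted independently. -/
noncomputable def wordProb (θ : A → Finset (List A)) (P : A → List A → ℝ) :
    List A → List A → ℝ
  | [], w => if w = [] then 1 else 0
  | a :: u, w =>
      ∑ v ∈ θ a, P a v * (if v <+: w then wordProb θ P u (w.drop v.length) else 0)

/-- `iterProb θ P n u w` is the probability `P[ϑ_P^n(u) = w]` of the induced Markov chain. -/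
noncomputable def iterProb (θ : A → Finset (List A)) (P : A → List A → ℝ) :
    ℕ → List A → List A → ℝ
  | 0, u, w => if u = w then 1 else 0
  | n + 1, u, w => ∑ v ∈ reals θ u, wordProb θ P u v * iterProb θ P n v w

/-- The substitution matrix `M_{ij} = E[|ϑ_P(a_j)|_{a_i}]`. -/
noncomputable def substM (θ : A → Finset (List A)) (P : A → List A → ℝ) :
    Matrix A A ℝ :=
  Matrix.of fun i j => ∑ w ∈ θ j, P j w * (w.count i : ℝ)

/-- The defining data of a random substitution: nonempty finite sets of nonempty words
and strictly positive probability vectors. -/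
def IsRandomSubstitution (θ : A → Finset (List A)) (P : A → List A → ℝ) : Prop :=
  (∀ a, (θ a).Nonempty) ∧ (∀ a, ∀ w ∈ θ a, w ≠ []) ∧
    (∀ a, ∀ w ∈ θ a, 0 < P a w) ∧ (∀ a w, w ∉ θ a → P a w = 0) ∧
    ∀ a, ∑ w ∈ θ a, P a w = 1

/-- Primitivity of the substitution matrix: some power has strictly positive entries. -/
def IsPrimitive (θ : A → Finset (List A)) (P : A → List A → ℝ) : Prop :=
  ∃ k : ℕ, ∀ i j : A, 0 < (substM θ P ^ k) i j

/-- The Perron–Frobenius eigenvalue is `> 1` (witnessed by a positive right eigenvector). -/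
def IsExpanding (θ : A → Finset (List A)) (P : A → List A → ℝ) : Prop :=
  ∃ lam : ℝ, 1 < lam ∧ ∃ R : A → ℝ, (∀ a, 0 < R a) ∧ (substM θ P).mulVec R = lam • R

/-- A word is legal if it occurs as a subword of some level-`k` inflation word. -/
def Legal (θ : A → Finset (List A)) (u : List A) : Prop :=
  ∃ (a : A) (k : ℕ) (w : List A), w ∈ realsIter θ k [a] ∧ u <:+: w

/-- All words of length `n` over the alphabet. -/
def allWords (A : Type*) [Fintype A] [DecidableEq A] (n : ℕ) : Finset (List A) :=
  (Finset.univ : Finset (Fin n → A)).image List.ofFn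

/-- All legal words of length `n`. -/
noncomputable def legalWords (θ : A → Finset (List A)) (n : ℕ) : Finset (List A) :=
  letI := Classical.decPred (Legal θ)
  (allWords A n).filter (Legal θ)

/-- The left shift on bi-infinite sequences. -/
def shift : (ℤ → A) → ℤ → A := fun x i => x (i + 1)

/-- The finite word of length `n` read off a bi-infinite sequence starting at position `m`. -/
def window (x : ℤ → A) (m : ℤ) (n : ℕ) : List A :=
  (List.range n).map fun t => x (m + (t : ℤ))

/-- The random substitution subshift `X_ϑ`. -/
def Xtheta (θ : A → Finset (List A)) : Set (ℤ → A) :=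
  {x | ∀ (m : ℤ) (n : ℕ), Legal θ (window x m n)}

/-- The cylinder set of the word `v` at position `m`. -/
def cylinder (v : List A) (m : ℤ) : Set (ℤ → A) :=
  {x | window x m v.length = v}

/-- The number `|w|_v` of (possibly overlapping) occurrences of `v` in `w`. -/
def occCount (v w : List A) : ℕ :=
  ((List.range w.length).filter fun i => decide (v <+: w.drop i)).length

/-- Expected length `E[|ϑ_P^k(a)|]`. -/
noncomputable def expLen (θ : A → Finset (List A)) (P : A → List A → ℝ)
    (k : ℕ) (a : A) : ℝ :=
  ∑ w ∈ realsIter θ k [a], iterProb θ P k [a] w * (w.length : ℝ)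

/-- Expected number of occurrences `E[|ϑ_P^k(a)|_v]`. -/
noncomputable def expCount (θ : A → Finset (List A)) (P : A → List A → ℝ)
    (k : ℕ) (a : A) (v : List A) : ℝ :=
  ∑ w ∈ realsIter θ k [a], iterProb θ P k [a] w * (occCount v w : ℝ)

/-- `μ` is the frequency measure of `(ϑ, P)`: a shift-invariant Borel probability measure
supported on `X_ϑ` whose cylinder values are the expected word frequencies. -/
def IsFrequencyMeasure [MeasurableSpace A] (θ : A → Finset (List A))
    (P : A → List A → ℝ) (μ : Measure (ℤ → A)) : Prop :=
  IsProbabilityMeasure μ ∧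
    (∀ s : Set (ℤ → A), MeasurableSet s → μ (shift ⁻¹' s) = μ s) ∧
    μ (Xtheta θ) = 1 ∧
    ∀ v : List A, Legal θ v → ∀ (m : ℤ) (a : A),
      Tendsto (fun k : ℕ => expCount θ P k a v / expLen θ P k a) atTop
        (nhds ((μ (cylinder v m)).toReal))

/-- The `n`-th entropy sum `∑_{u ∈ L_ϑ^n} -μ[u] log μ[u]`. -/
noncomputable def entropySeq [MeasurableSpace A] (θ : A → Finset (List A))
    (μ : Measure (ℤ → A)) (n : ℕ) : ℝ :=
  ∑ u ∈ legalWords θ n, Real.negMulLog ((μ (cylinder u 0)).toReal)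

/-- The measure-theoretic (Kolmogorov–Sinai) entropy of the shift with respect to `μ`,
computed along cylinder partitions. -/
noncomputable def measEntropy [MeasurableSpace A] (θ : A → Finset (List A))
    (μ : Measure (ℤ → A)) : ℝ :=
  limsup (fun n : ℕ => entropySeq θ μ n / (n : ℝ)) atTop

/-- The topological entropy of the subshift `X_ϑ`. -/
noncomputable def topEntropy (θ : A → Finset (List A)) : ℝ :=
  limsup (fun n : ℕ => Real.log ((legalWords θ n).card) / (n : ℝ)) atTop

/-- The entropy vector `H_{k,a} = H(ϑ_P^k(a))`. -/
noncomputable def Hvec (θ : A → Finset (List A)) (P : A → List A → ℝ)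
    (k : ℕ) (a : A) : ℝ :=
  ∑ w ∈ realsIter θ k [a], Real.negMulLog (iterProb θ P k [a] w)

/-- The inner product `H_k^T R`. -/
noncomputable def HdotR (θ : A → Finset (List A)) (P : A → List A → ℝ)
    (R : A → ℝ) (k : ℕ) : ℝ :=
  ∑ a, Hvec θ P k a * R a

/-- Binary entropy `H(p) = -p log p - (1-p) log (1-p)`. -/
noncomputable def binEnt (p : ℝ) : ℝ := Real.negMulLog p + Real.negMulLog (1 - p)

/-- Unique realisation paths: concatenation of level-`k` inflation words of the letters of a
legal word is injective. -/
def UniqueRealisationPaths (θ : A → Finset (List A)) : Prop :=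
  ∀ v : List A, Legal θ v → ∀ k : ℕ, ∀ f g : Fin v.length → List A,
    (∀ i, f i ∈ realsIter θ k [v.get i]) → (∀ i, g i ∈ realsIter θ k [v.get i]) →
      (List.ofFn f).flatten = (List.ofFn g).flatten → f = g

/-- The disjoint set condition. -/
def DisjointSetCondition (θ : A → Finset (List A)) : Prop :=
  ∀ (a : A) (k : ℕ), ∀ u ∈ θ a, ∀ v ∈ θ a, u ≠ v →
    ∀ w, w ∈ realsIter θ k u → w ∉ realsIter θ k v

/-- The identical set condition. -/
def IdenticalSetCondition (θ : A → Finset (List A)) : Prop :=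
  ∀ (a : A) (k : ℕ), ∀ u ∈ θ a, ∀ v ∈ θ a, realsIter θ k u = realsIter θ k v

/-- Identical production probabilities. -/
def IdenticalProductionProbabilities (θ : A → Finset (List A))
    (P : A → List A → ℝ) : Prop :=
  ∀ a : A, ∀ u ∈ θ a, ∀ v ∈ θ a, ∀ (k : ℕ) (w : List A),
    iterProb θ P k u w = iterProb θ P k v w

/-- The disjoint set condition for the `k`-th power `ϑ^k`. -/
def DisjointSetConditionPow (θ : A → Finset (List A)) (k : ℕ) : Prop :=
  ∀ (a : A) (j : ℕ), ∀ u ∈ realsIter θ k [a], ∀ v ∈ realsIter θ k [a], u ≠ v →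
    ∀ w, w ∈ realsIter θ (k * j) u → w ∉ realsIter θ (k * j) v

/-- The identical set condition for the `k`-th power `ϑ^k`. -/
def IdenticalSetConditionPow (θ : A → Finset (List A)) (k : ℕ) : Prop :=
  ∀ (a : A) (j : ℕ), ∀ u ∈ realsIter θ k [a], ∀ v ∈ realsIter θ k [a],
    realsIter θ (k * j) u = realsIter θ (k * j) v

/-- Identical production probabilities for the `k`-th power `ϑ^k`. -/
def IdenticalProductionProbabilitiesPow (θ : A → Finset (List A))
    (P : A → List A → ℝ) (k : ℕ) : Prop :=
  ∀ a : A, ∀ u ∈ realsIter θ k [a], ∀ v ∈ realsIter θ k [a], ∀ (j : ℕ) (w : List A),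
    iterProb θ P (k * j) u w = iterProb θ P (k * j) v w

/-- Compatibility: all realisations of a letter have the same abelianisation. -/
def Compatible (θ : A → Finset (List A)) : Prop :=
  ∀ a : A, ∀ u ∈ θ a, ∀ v ∈ θ a, ∀ b : A, u.count b = v.count b

/-- Constant length `ℓ ≥ 2`. -/
def ConstantLength (θ : A → Finset (List A)) (ℓ : ℕ) : Prop :=
  2 ≤ ℓ ∧ ∀ a : A, ∀ w ∈ θ a, w.length = ℓ

/-- The set `ϑ(y)` of bi-infinite sequences obtained by substituting each letter of `y`,
with the image of `y 0` beginning at position `0`. -/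
def substSeq (θ : A → Finset (List A)) (y : ℤ → A) : Set (ℤ → A) :=
  {x | ∃ v : ℤ → List A, (∀ j, v j ∈ θ (y j)) ∧
    ∃ p : ℤ → ℤ, p 0 = 0 ∧ (∀ j, p (j + 1) = p j + (v j).length) ∧
      ∀ (j : ℤ) (t : ℕ) (ht : t < (v j).length), x (p j + (t : ℤ)) = (v j).get ⟨t, ht⟩}

/-- `ϑ(X)` for a set of bi-infinite sequences. -/
def substImage (θ : A → Finset (List A)) (X : Set (ℤ → A)) : Set (ℤ → A) :=
  ⋃ y ∈ X, substSeq θ y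

/-- The set `ϑ^m(y)` of bi-infinite sequences. -/
def substSeqPow (θ : A → Finset (List A)) : ℕ → (ℤ → A) → Set (ℤ → A)
  | 0, y => {y}
  | m + 1, y => ⋃ z ∈ substSeq θ y, substSeqPow θ m z

/-- The maximal length of an inflation word of the letter `a` (equals the common length
when lengths are well-defined). -/
def maxLen (θ : A → Finset (List A)) (a : A) : ℕ := (θ a).sup List.length

/-- Recognisability: every `x ∈ X_ϑ` has a unique inflation-word decomposition. -/
def Recognisable (θ : A → Finset (List A)) : Prop :=
  ∀ x ∈ Xtheta θ, ∃! p : (ℤ → A) × ℕ,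
    p.1 ∈ Xtheta θ ∧ p.2 < maxLen θ (p.1 0) ∧
      (fun i => x (i - (p.2 : ℤ))) ∈ substSeq θ p.1

/-- Recognisability of the `m`-th power of a constant length-`ℓ` substitution. -/
def RecognisablePow (θ : A → Finset (List A)) (m ℓ : ℕ) : Prop :=
  ∀ x ∈ Xtheta θ, ∃! p : (ℤ → A) × ℕ,
    p.1 ∈ Xtheta θ ∧ p.2 < ℓ ^ m ∧
      (fun i => x (i - (p.2 : ℤ))) ∈ substSeqPow θ m p.1

/-- The set `ϑ^m([a])` of exact images of sequences in the cylinder `[a] ⊆ X_ϑ`. -/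
def inflCylPow (θ : A → Finset (List A)) (m : ℕ) (a : A) : Set (ℤ → A) :=
  ⋃ y ∈ {w ∈ Xtheta θ | w 0 = a}, substSeqPow θ m y

/-- `r` is a radius of local recognisability for `ϑ^m`. -/
def RecogPropPow (θ : A → Finset (List A)) (m r : ℕ) : Prop :=
  ∀ (a : A) (x : ℤ → A), x ∈ inflCylPow θ m a → ∀ y ∈ Xtheta θ,
    (∀ t : ℤ, -(r : ℤ) ≤ t → t ≤ (r : ℤ) → x t = y t) → y ∈ inflCylPow θ m a

/-- The recognisability radius `κ(ϑ^m)`. -/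
noncomputable def recogRadiusPow (θ : A → Finset (List A)) (m : ℕ) : ℕ :=
  sInf {r | RecogPropPow θ m r}

/-- The recognisability radius `κ(ϑ)`. -/
noncomputable def recogRadius (θ : A → Finset (List A)) : ℕ := recogRadiusPow θ 1

/-- The random word `ϑ_P^n(a)` is (a.s.) completely determined by `ϑ_P^{n+k}(a)`
in the Markov chain. -/
def DeterminedBy (θ : A → Finset (List A)) (P : A → List A → ℝ)
    (a : A) (n k : ℕ) : Prop :=
  ∀ v₁ v₂ w : List A, v₁ ∈ realsIter θ n [a] → v₂ ∈ realsIter θ n [a] →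
    0 < iterProb θ P n [a] v₁ * iterProb θ P k v₁ w →
      0 < iterProb θ P n [a] v₂ * iterProb θ P k v₂ w → v₁ = v₂

/-- The random words `ϑ_P^n(a)` and `ϑ_P^{n+k}(a)` are independent in the Markov chain. -/
def IndepSteps (θ : A → Finset (List A)) (P : A → List A → ℝ)
    (a : A) (n k : ℕ) : Prop :=
  ∀ v w : List A,
    iterProb θ P n [a] v * iterProb θ P k v w =
      iterProb θ P n [a] v * iterProb θ P (n + k) [a] w

/-- The substitution matrix of a marginal (deterministic) substitution. -/
def marginalM (ρ : A → List A) : Matrix A A ℝ :=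
  Matrix.of fun i j => ((ρ j).count i : ℝ)

/-- Geometric compatibility: a single positive left eigenvector with eigenvalue `λ > 1`
for all marginals. -/
def GeometricallyCompatible (θ : A → Finset (List A)) : Prop :=
  ∃ lam : ℝ, 1 < lam ∧ ∃ L : A → ℝ, (∀ a, 0 < L a) ∧
    ∀ ρ : A → List A, (∀ a, ρ a ∈ θ a) → Matrix.vecMul L (marginalM ρ) = lam • L

/-!
Choose `y ∈ X_ϑ` with `y 0 = a`; it exists by compactness of `A^ℤ`, since primitivity and
`λ > 1` give legal words of any length centred at `a`. Suppose `w ∈ ϑ^k(u) ∩ ϑ^k(v)` with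
`u ≠ v` in `ϑ(a)`. Substituting `y` letterwise with `u`, resp. `v`, at the origin and the same words
elsewhere gives points `z₁, z₂ ∈ ϑ(y) ⊆ X_ϑ`, distinct because `|u| = |v|`. Realising `w` at the
origin and the same level-`k` words elsewhere gives one point of `ϑ^k(z₁) ∩ ϑ^k(z₂)`. But
recognisability says that the sets `ϑ(z)`, `z ∈ X_ϑ`, are pairwise disjoint (a desubstitution with
shift `0` is unique), hence so are the `ϑ^k(z)` by induction, as `ϑ(X_ϑ) ⊆ X_ϑ`; so `z₁ = z₂`.
-/

section Window

variable {α : Type*}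

lemma window_eq_map (x : ℤ → α) (m : ℤ) (n : ℕ) :
    window x m n = (List.range n).map fun i : ℕ => x (m + i) := by
  simp [window, ← List.map_eq_flatMap, Function.comp_def]

@[simp]
lemma length_window (x : ℤ → α) (m : ℤ) (n : ℕ) : (window x m n).length = n := by
  simp [window_eq_map]

@[simp]
lemma getElem_window (x : ℤ → α) (m : ℤ) (n i : ℕ) (hi : i < (window x m n).length) :
    (window x m n)[i] = x (m + i) := by
  simp [window_eq_map]

@[simp]
lemma window_zero (x : ℤ → α) (m : ℤ) : window x m 0 = [] := by
  simp [window_eq_map]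

@[simp]
lemma window_one (x : ℤ → α) (m : ℤ) : window x m 1 = [x m] := by
  simp [window_eq_map]

lemma window_add (x : ℤ → α) (m : ℤ) (n₁ n₂ : ℕ) :
    window x m (n₁ + n₂) = window x m n₁ ++ window x (m + n₁) n₂ := by
  simp only [window_eq_map, List.range_add, List.map_append, List.map_map]
  congr 2
  funext i
  simp [add_assoc]

lemma window_infix (x : ℤ → α) {m m' : ℤ} {n n' : ℕ} (h₁ : m ≤ m') (h₂ : m' + n' ≤ m + n) :
    window x m' n' <:+: window x m n := by
  obtain ⟨d, rfl⟩ : ∃ d : ℕ, m' = m + d := ⟨(m' - m).toNat, by omega⟩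
  obtain ⟨e, rfl⟩ : ∃ e : ℕ, n = d + n' + e := ⟨n - d - n', by omega⟩
  rw [window_add, window_add]
  exact ⟨window x m d, _, rfl⟩

lemma window_eq_ofFn (x : ℤ → α) (m : ℤ) (n : ℕ) :
    window x m n = List.ofFn fun i : Fin n => x (m + i) := by
  apply List.ext_getElem <;> simp

end Window

lemma _root_.StrictMono.exists_apply_le_lt_apply_succ {f : ℤ → ℤ} (hf : StrictMono f) (t : ℤ) :
    ∃ j, f j ≤ t ∧ t < f (j + 1) := by
  have hgrow : ∀ (j : ℤ) (n : ℕ), f j + n ≤ f (j + n) := by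
    intro j n
    induction n with
    | zero => simp
    | succ n ih =>
      have := hf (show j + n < j + (n + 1 : ℕ) by omega)
      push_cast at this ⊢
      omega
  obtain ⟨j, hj, hmax⟩ := Int.exists_greatest_of_bdd (P := fun j => f j ≤ t)
    ⟨max (t - f 0) 0, fun z hz => by
      by_contra! h
      have := hgrow 0 z.toNat
      simp only [zero_add, Int.toNat_of_nonneg (by omega : 0 ≤ z)] at this
      omega⟩
    ⟨min (t - f 0) 0, by
      have := hgrow (min (t - f 0) 0) (-min (t - f 0) 0).toNat
      rw [Int.toNat_of_nonneg (by omega), add_neg_cancel] at this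
      omega⟩
  exact ⟨j, hj, not_le.1 fun h => by linarith [hmax _ h]⟩

section Glue

variable {α : Type*}

/-- `cumul F j` is the position at which the block `F j` starts when the blocks `F j` are laid
out consecutively along `ℤ` with `F 0` starting at `0`. -/
def cumul (F : ℤ → List α) (j : ℤ) : ℤ :=
  if 0 ≤ j then (window F 0 j.toNat).flatten.length else -(window F j (-j).toNat).flatten.length

@[simp]
lemma cumul_zero (F : ℤ → List α) : cumul F 0 = 0 := by
  simp [cumul]

lemma cumul_succ (F : ℤ → List α) (j : ℤ) : cumul F (j + 1) = cumul F j + (F j).length := by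
  rcases lt_or_ge j 0 with hj | hj
  · have h := window_add F j 1 (-(j + 1)).toNat
    rw [show 1 + (-(j + 1)).toNat = (-j).toNat by omega, window_one] at h
    rcases eq_or_lt_of_le (show j + 1 ≤ 0 by omega) with h0 | h0
    · simp [cumul, show j = -1 by omega]
    · simp only [cumul, h, if_neg (show ¬ 0 ≤ j by omega), if_neg (show ¬ 0 ≤ j + 1 by omega)]
      simp
  · have h := window_add F 0 j.toNat 1
    rw [window_one] at h
    simp only [cumul, if_pos hj, if_pos (show 0 ≤ j + 1 by omega),
      show (j + 1).toNat = j.toNat + 1 by omega, h, Int.toNat_of_nonneg hj]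
    simp

lemma cumul_unique {F : ℤ → List α} {c : ℤ → ℤ} (h₀ : c 0 = 0)
    (hsucc : ∀ j, c (j + 1) = c j + (F j).length) : c = cumul F := by
  funext j
  induction j using Int.induction_on with
  | zero => simp [h₀]
  | succ j ih => rw [hsucc, cumul_succ, ih]
  | pred j ih =>
    have h₁ := hsucc (-j - 1)
    have h₂ := cumul_succ F (-j - 1)
    rw [sub_add_cancel] at h₁ h₂
    omega

lemma cumul_congr {β : Type*} {F : ℤ → List α} {F' : ℤ → List β}
    (h : ∀ j, (F j).length = (F' j).length) : cumul F = cumul F' :=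
  cumul_unique (cumul_zero F) fun j => by rw [cumul_succ, h]

lemma cumul_add_nat (F : ℤ → List α) (j : ℤ) (n : ℕ) :
    cumul F (j + n) = cumul F j + (window F j n).flatten.length := by
  induction n with
  | zero => simp
  | succ n ih =>
    rw [Nat.cast_succ, ← add_assoc, cumul_succ, ih, window_add, window_one]
    simp [add_assoc]

variable {F : ℤ → List α} (hF : ∀ j, F j ≠ [])
include hF

lemma strictMono_cumul : StrictMono (cumul F) :=
  strictMono_int_of_lt_succ fun j => by
    simpa [cumul_succ] using List.length_pos_iff.2 (hF j)

lemma exists_eq_cumul_add (t : ℤ) : ∃ j, ∃ i < (F j).length, t = cumul F j + i := by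
  obtain ⟨j, h₁, h₂⟩ := (strictMono_cumul hF).exists_apply_le_lt_apply_succ t
  rw [cumul_succ] at h₂
  exact ⟨j, (t - cumul F j).toNat, by omega, by omega⟩

lemma eq_of_cumul_le_lt {j j' t : ℤ} (h₁ : cumul F j ≤ t) (h₂ : t < cumul F (j + 1))
    (h₁' : cumul F j' ≤ t) (h₂' : t < cumul F (j' + 1)) : j = j' := by
  have := (strictMono_cumul hF).lt_iff_lt.1 (h₁.trans_lt h₂')
  have := (strictMono_cumul hF).lt_iff_lt.1 (h₁'.trans_lt h₂)
  omega

omit hF in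
open Classical in
/-- The bi-infinite concatenation of the blocks `F j`, with `F 0` starting at position `0`. -/
noncomputable def glue [Inhabited α] (F : ℤ → List α) (t : ℤ) : α :=
  if h : ∃ j, cumul F j ≤ t ∧ t < cumul F (j + 1) then
    (F h.choose).getD (t - cumul F h.choose).toNat default
  else default

lemma glue_cumul_add [Inhabited α] {j : ℤ} {i : ℕ} (hi : i < (F j).length) :
    glue F (cumul F j + i) = (F j)[i] := by
  have hblock : cumul F j ≤ cumul F j + i ∧ cumul F j + i < cumul F (j + 1) := by
    rw [cumul_succ]; omega
  have hex : ∃ j', cumul F j' ≤ cumul F j + i ∧ cumul F j + i < cumul F (j' + 1) := ⟨j, hblock⟩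
  have hj : hex.choose = j :=
    eq_of_cumul_le_lt hF hex.choose_spec.1 hex.choose_spec.2 hblock.1 hblock.2
  rw [glue, dif_pos hex]
  simp only [hj, add_sub_cancel_left, Int.toNat_natCast, List.getD_eq_getElem _ _ hi]

lemma eq_glue_iff [Inhabited α] {x : ℤ → α} :
    x = glue F ↔ ∀ j, window x (cumul F j) (F j).length = F j := by
  constructor
  · rintro rfl j
    apply List.ext_getElem (by simp)
    intro i hi _
    simp only [getElem_window]
    exact glue_cumul_add hF (by simpa using hi)
  · intro h
    funext t
    obtain ⟨j, i, hi, rfl⟩ := exists_eq_cumul_add hF t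
    rw [glue_cumul_add hF hi]
    have := List.getElem_of_eq (h j) (by simpa using hi)
    rwa [getElem_window] at this

lemma window_glue [Inhabited α] (j : ℤ) (n : ℕ) :
    window (glue F) (cumul F j) (window F j n).flatten.length = (window F j n).flatten := by
  induction n with
  | zero => simp
  | succ n ih =>
    rw [window_add F j n 1, List.flatten_append, List.length_append, window_add, ih,
      ← cumul_add_nat, window_one, List.flatten_singleton, (eq_glue_iff hF).1 rfl]

end Glue

lemma glue_glue {α : Type*} [Inhabited α] {G : ℤ → List (List α)} (hG : ∀ j, G j ≠ [])
    (hG' : ∀ j, ∀ w ∈ G j, w ≠ []) : glue (glue G) = glue fun j => (G j).flatten := by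
  have hW : ∀ j, window (glue G) (cumul G j) (G j).length = G j := (eq_glue_iff hG).1 rfl
  have hWne : ∀ t, glue G t ≠ [] := by
    intro t
    obtain ⟨j, i, hi, rfl⟩ := exists_eq_cumul_add hG t
    rw [glue_cumul_add hG hi]
    exact hG' j _ (List.getElem_mem hi)
  have hcumul : cumul (fun j => (G j).flatten) = fun j => cumul (glue G) (cumul G j) :=
    (cumul_unique (by simp) fun j => by rw [cumul_succ, cumul_add_nat, hW]).symm
  have hne : ∀ j, (G j).flatten ≠ [] := by
    intro j h
    obtain ⟨w, hw⟩ := List.exists_mem_of_ne_nil _ (hG j)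
    exact hG' j w hw (List.flatten_eq_nil_iff.1 h w hw)
  refine (eq_glue_iff hne).2 fun j => ?_
  have := window_glue hWne (cumul G j) (G j).length
  rwa [hW, ← congrFun hcumul] at this

section Realisations

omit [Fintype A]

variable {θ : A → Finset (List A)}

lemma mem_reals_cons {a : A} {u w : List A} :
    w ∈ reals θ (a :: u) ↔ ∃ v ∈ θ a, ∃ x ∈ reals θ u, w = v ++ x := by
  simp [reals, eq_comm]

lemma mem_reals_iff {u w : List A} :
    w ∈ reals θ u ↔ ∃ G, List.Forall₂ (fun a v => v ∈ θ a) u G ∧ w = G.flatten := by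
  induction u generalizing w with
  | nil => simp [reals]
  | cons a u ih =>
    simp only [mem_reals_cons, ih, List.forall₂_cons_left_iff]
    constructor
    · rintro ⟨v, hv, _, ⟨G, hG, rfl⟩, rfl⟩
      exact ⟨v :: G, ⟨v, G, hv, hG, rfl⟩, rfl⟩
    · rintro ⟨_, ⟨v, G, hv, hG, rfl⟩, rfl⟩
      exact ⟨v, hv, _, ⟨G, hG, rfl⟩, rfl⟩

lemma mem_reals_append {u u' w : List A} :
    w ∈ reals θ (u ++ u') ↔ ∃ x ∈ reals θ u, ∃ y ∈ reals θ u', w = x ++ y := by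
  induction u generalizing w with
  | nil => simp [reals]
  | cons a u ih =>
    simp only [List.cons_append, mem_reals_cons, ih]
    constructor
    · rintro ⟨v, hv, _, ⟨x, hx, y, hy, rfl⟩, rfl⟩
      exact ⟨v ++ x, ⟨v, hv, x, hx, rfl⟩, y, hy, by simp⟩
    · rintro ⟨_, ⟨v, hv, x, hx, rfl⟩, y, hy, rfl⟩
      exact ⟨v, hv, x ++ y, ⟨x, hx, y, hy, rfl⟩, by simp⟩

lemma mem_reals_singleton {a : A} {w : List A} : w ∈ reals θ [a] ↔ w ∈ θ a := by
  simp [reals]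

lemma reals_nonempty (hθ : ∀ a, (θ a).Nonempty) (u : List A) : (reals θ u).Nonempty := by
  induction u with
  | nil => simp [reals]
  | cons a u ih =>
    obtain ⟨v, hv⟩ := hθ a
    obtain ⟨x, hx⟩ := ih
    exact ⟨v ++ x, mem_reals_cons.2 ⟨v, hv, x, hx, rfl⟩⟩

lemma length_le_of_mem_reals (hθnil : ∀ a, ∀ w ∈ θ a, w ≠ []) {u w : List A}
    (h : w ∈ reals θ u) : u.length ≤ w.length := by
  induction u generalizing w with
  | nil => simp
  | cons a u ih =>
    obtain ⟨v, hv, x, hx, rfl⟩ := mem_reals_cons.1 h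
    have := List.length_pos_iff.2 (hθnil a v hv)
    simp only [List.length_cons, List.length_append]
    linarith [ih hx]

lemma mem_realsIter_zero {u w : List A} : w ∈ realsIter θ 0 u ↔ w = u := by
  simp [realsIter]

lemma mem_realsIter_succ {n : ℕ} {u w : List A} :
    w ∈ realsIter θ (n + 1) u ↔ ∃ v ∈ reals θ u, w ∈ realsIter θ n v := by
  simp [realsIter]

lemma mem_realsIter_one {a : A} {w : List A} : w ∈ realsIter θ 1 [a] ↔ w ∈ θ a := by
  simp [mem_realsIter_succ, mem_realsIter_zero, mem_reals_singleton]

lemma mem_realsIter_add {m n : ℕ} {u w : List A} :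
    w ∈ realsIter θ (m + n) u ↔ ∃ v ∈ realsIter θ m u, w ∈ realsIter θ n v := by
  induction m generalizing u with
  | zero => simp [mem_realsIter_zero]
  | succ m ih => simp only [Nat.succ_add, mem_realsIter_succ, ih]; aesop

lemma mem_realsIter_append {n : ℕ} {u u' w : List A} :
    w ∈ realsIter θ n (u ++ u') ↔ ∃ x ∈ realsIter θ n u, ∃ y ∈ realsIter θ n u', w = x ++ y := by
  induction n generalizing u u' w with
  | zero => simp [mem_realsIter_zero]
  | succ n ih =>
    simp only [mem_realsIter_succ, mem_reals_append]
    constructor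
    · rintro ⟨_, ⟨x, hx, y, hy, rfl⟩, hw⟩
      obtain ⟨x', hx', y', hy', rfl⟩ := ih.1 hw
      exact ⟨x', ⟨x, hx, hx'⟩, y', ⟨y, hy, hy'⟩, rfl⟩
    · rintro ⟨x', ⟨x, hx, hx'⟩, y', ⟨y, hy, hy'⟩, rfl⟩
      exact ⟨x ++ y, ⟨x, hx, y, hy, rfl⟩, ih.2 ⟨x', hx', y', hy', rfl⟩⟩

lemma realsIter_nonempty (hθ : ∀ a, (θ a).Nonempty) (n : ℕ) (u : List A) :
    (realsIter θ n u).Nonempty := by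
  induction n generalizing u with
  | zero => simp [realsIter]
  | succ n ih =>
    obtain ⟨v, hv⟩ := reals_nonempty hθ u
    obtain ⟨w, hw⟩ := ih v
    exact ⟨w, mem_realsIter_succ.2 ⟨v, hv, hw⟩⟩

lemma length_le_of_mem_realsIter (hθnil : ∀ a, ∀ w ∈ θ a, w ≠ []) {n : ℕ} {u w : List A}
    (h : w ∈ realsIter θ n u) : u.length ≤ w.length := by
  induction n generalizing u with
  | zero => rw [mem_realsIter_zero.1 h]
  | succ n ih =>
    obtain ⟨v, hv, hw⟩ := mem_realsIter_succ.1 h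
    exact (length_le_of_mem_reals hθnil hv).trans (ih hw)

lemma exists_append_mem_realsIter (hθ : ∀ a, (θ a).Nonempty) (hθnil : ∀ a, ∀ w ∈ θ a, w ≠ [])
    {k : ℕ} {c : A} {z : List A} (hz : z ∈ realsIter θ k [c]) (s t : List A) :
    ∃ S T, s.length ≤ S.length ∧ t.length ≤ T.length ∧
      S ++ z ++ T ∈ realsIter θ k (s ++ c :: t) := by
  obtain ⟨S, hS⟩ := realsIter_nonempty hθ k s
  obtain ⟨T, hT⟩ := realsIter_nonempty hθ k t
  refine ⟨S, T, length_le_of_mem_realsIter hθnil hS, length_le_of_mem_realsIter hθnil hT, ?_⟩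
  rw [← List.singleton_append, mem_realsIter_append]
  exact ⟨S, hS, z ++ T, mem_realsIter_append.2 ⟨z, hz, T, hT, rfl⟩, by simp⟩

end Realisations

section Sequences

omit [Fintype A]

variable {θ : A → Finset (List A)}

omit [DecidableEq A] in
lemma mem_substSeq_iff [Inhabited A] (hθnil : ∀ a, ∀ w ∈ θ a, w ≠ []) {y x : ℤ → A} :
    x ∈ substSeq θ y ↔ ∃ v : ℤ → List A, (∀ j, v j ∈ θ (y j)) ∧ x = glue v := by
  constructor
  · rintro ⟨v, hv, p, hp₀, hpsucc, hx⟩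
    obtain rfl : p = cumul v := cumul_unique hp₀ hpsucc
    refine ⟨v, hv, (eq_glue_iff fun j => hθnil _ _ (hv j)).2 fun j => ?_⟩
    apply List.ext_getElem (by simp)
    intro i hi _
    simpa using hx j i (by simpa using hi)
  · rintro ⟨v, hv, rfl⟩
    refine ⟨v, hv, cumul v, cumul_zero v, cumul_succ v, fun j t ht => ?_⟩
    simpa using glue_cumul_add (fun j => hθnil _ _ (hv j)) ht

lemma glue_mem_substSeq_glue [Inhabited A] (hθnil : ∀ a, ∀ w ∈ θ a, w ≠ [])
    {V V' : ℤ → List A} (hV : ∀ j, V j ≠ []) (h : ∀ j, V' j ∈ reals θ (V j)) :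
    glue V' ∈ substSeq θ (glue V) := by
  choose G hG hV' using fun j => mem_reals_iff.1 (h j)
  have hGne : ∀ j, G j ≠ [] := fun j => by
    rw [← List.length_pos_iff, ← (hG j).length_eq]
    exact List.length_pos_iff.2 (hV j)
  have hGne' : ∀ j, ∀ w ∈ G j, w ≠ [] := by
    intro j w hw
    obtain ⟨i, hi, rfl⟩ := List.getElem_of_mem hw
    exact hθnil _ _ ((hG j).get (by rwa [(hG j).length_eq]) hi)
  have hmem : ∀ s, glue G s ∈ θ (glue V s) := by
    intro s
    obtain ⟨j, i, hi, rfl⟩ := exists_eq_cumul_add hV s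
    have hi' : i < (G j).length := by rwa [← (hG j).length_eq]
    rw [glue_cumul_add hV hi, cumul_congr (F' := G) fun j => (hG j).length_eq,
      glue_cumul_add hGne hi']
    exact (hG j).get hi hi'
  rw [show V' = fun j => (G j).flatten from funext hV', ← glue_glue hGne hGne']
  exact (mem_substSeq_iff hθnil).2 ⟨glue G, hmem, rfl⟩

lemma glue_mem_substSeqPow [Inhabited A] (hθnil : ∀ a, ∀ w ∈ θ a, w ≠ []) (k : ℕ)
    {V H : ℤ → List A} (hV : ∀ j, V j ≠ []) (h : ∀ j, H j ∈ realsIter θ k (V j)) :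
    glue H ∈ substSeqPow θ k (glue V) := by
  induction k generalizing V with
  | zero =>
    obtain rfl : H = V := funext fun j => mem_realsIter_zero.1 (h j)
    rfl
  | succ k ih =>
    choose V' hV' hH using fun j => mem_realsIter_succ.1 (h j)
    have hV'ne : ∀ j, V' j ≠ [] := fun j => by
      rw [← List.length_pos_iff]
      exact (List.length_pos_iff.2 (hV j)).trans_le (length_le_of_mem_reals hθnil (hV' j))
    exact Set.mem_biUnion (glue_mem_substSeq_glue hθnil hV hV') (ih hV'ne hH)

end Sequences

section Legal

omit [Fintype A]

variable {θ : A → Finset (List A)}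

lemma legal_of_mem_realsIter {a : A} {k : ℕ} {w : List A} (h : w ∈ realsIter θ k [a]) :
    Legal θ w :=
  ⟨a, k, w, h, List.infix_refl w⟩

lemma Legal.of_infix {u w : List A} (hw : Legal θ w) (h : u <:+: w) : Legal θ u := by
  obtain ⟨b, k, W, hW, hwW⟩ := hw
  exact ⟨b, k, W, hW, h.trans hwW⟩

lemma Legal.of_mem_reals (hθ : ∀ a, (θ a).Nonempty) {u w : List A} (hu : Legal θ u)
    (hw : w ∈ reals θ u) : Legal θ w := by
  obtain ⟨b, k, _, hW, s, t, rfl⟩ := hu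
  obtain ⟨S, hS⟩ := reals_nonempty hθ s
  obtain ⟨T, hT⟩ := reals_nonempty hθ t
  have : S ++ w ++ T ∈ reals θ (s ++ u ++ t) :=
    mem_reals_append.2 ⟨_, mem_reals_append.2 ⟨S, hS, w, hw, rfl⟩, T, hT, rfl⟩
  exact (legal_of_mem_realsIter (mem_realsIter_add.2
    ⟨_, hW, mem_realsIter_succ.2 ⟨_, this, mem_realsIter_zero.2 rfl⟩⟩)).of_infix ⟨S, T, rfl⟩

lemma mem_Xtheta_of_mem_substSeq (hθ : ∀ a, (θ a).Nonempty) (hθnil : ∀ a, ∀ w ∈ θ a, w ≠ [])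
    {y x : ℤ → A} (hy : y ∈ Xtheta θ) (hx : x ∈ substSeq θ y) : x ∈ Xtheta θ := by
  have : Inhabited A := ⟨y 0⟩
  obtain ⟨v, hv, rfl⟩ := (mem_substSeq_iff hθnil).1 hx
  have hvne : ∀ j, v j ≠ [] := fun j => hθnil _ _ (hv j)
  intro m n
  obtain ⟨j₁, i₁, -, hm⟩ := exists_eq_cumul_add hvne m
  obtain ⟨j₂, i₂, hi₂, hmn⟩ := exists_eq_cumul_add hvne (m + n)
  have hj : j₁ < j₂ + 1 := (strictMono_cumul hvne).lt_iff_lt.1 (by rw [cumul_succ]; omega)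
  have hN : cumul v (j₁ + (j₂ + 1 - j₁).toNat) = cumul v (j₂ + 1) := by
    congr 1; omega
  have hreals : (window v j₁ (j₂ + 1 - j₁).toNat).flatten ∈
      reals θ (window y j₁ (j₂ + 1 - j₁).toNat) :=
    mem_reals_iff.2 ⟨_, List.forall₂_iff_get.2 ⟨by simp, fun i _ _ => by simpa using hv _⟩, rfl⟩
  refine ((hy j₁ _).of_mem_reals hθ hreals).of_infix ?_
  rw [← window_glue hvne]
  apply window_infix _ (by omega)
  rw [← cumul_add_nat, hN, cumul_succ]
  omega

lemma Recognisable.eq_of_mem_substSeqPow (hrec : Recognisable θ) (hθ : ∀ a, (θ a).Nonempty)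
    (hθnil : ∀ a, ∀ w ∈ θ a, w ≠ []) (k : ℕ) {z₁ z₂ x : ℤ → A} (hz₁ : z₁ ∈ Xtheta θ)
    (hz₂ : z₂ ∈ Xtheta θ) (hx₁ : x ∈ substSeqPow θ k z₁) (hx₂ : x ∈ substSeqPow θ k z₂) :
    z₁ = z₂ := by
  induction k generalizing z₁ z₂ with
  | zero => exact hx₁.symm.trans hx₂
  | succ k ih =>
    obtain ⟨z₁', hz₁', hx₁⟩ := Set.mem_iUnion₂.1 hx₁
    obtain ⟨z₂', hz₂', hx₂⟩ := Set.mem_iUnion₂.1 hx₂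
    have hX := mem_Xtheta_of_mem_substSeq hθ hθnil hz₁ hz₁'
    obtain rfl := ih hX (mem_Xtheta_of_mem_substSeq hθ hθnil hz₂ hz₂') hx₁ hx₂
    have hmaxLen : ∀ c, 0 < maxLen θ c := fun c => by
      obtain ⟨w, hw⟩ := hθ c
      exact (List.length_pos_iff.2 (hθnil c w hw)).trans_le (Finset.le_sup hw)
    obtain ⟨_, -, huniq⟩ := hrec z₁' hX
    have h₁ := huniq (z₁, 0) ⟨hz₁, hmaxLen _, by simpa using hz₁'⟩
    have h₂ := huniq (z₂, 0) ⟨hz₂, hmaxLen _, by simpa using hz₂'⟩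
    exact congrArg Prod.fst (h₁.trans h₂.symm)

end Legal

section Primitivity

variable {θ : A → Finset (List A)} {P : A → List A → ℝ}

omit [Fintype A] in
lemma substM_nonneg (hRS : IsRandomSubstitution θ P) (i j : A) : 0 ≤ substM θ P i j :=
  Finset.sum_nonneg fun w hw => mul_nonneg (hRS.2.2.1 j w hw).le (Nat.cast_nonneg _)

lemma substM_pow_nonneg (hRS : IsRandomSubstitution θ P) (k : ℕ) (i j : A) :
    0 ≤ (substM θ P ^ k) i j := by
  induction k generalizing i j with
  | zero => by_cases h : i = j <;> simp [h]
  | succ k ih =>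
    rw [pow_succ, Matrix.mul_apply]
    exact Finset.sum_nonneg fun c _ => mul_nonneg (ih i c) (substM_nonneg hRS c j)

omit [Fintype A] in
lemma exists_mem_of_substM_pos (hRS : IsRandomSubstitution θ P) {i j : A}
    (h : 0 < substM θ P i j) : ∃ w ∈ θ j, i ∈ w := by
  have hnonneg : ∀ w ∈ θ j, 0 ≤ P j w * (w.count i : ℝ) :=
    fun w hw => mul_nonneg (hRS.2.2.1 j w hw).le (Nat.cast_nonneg _)
  obtain ⟨w, hw, hpos⟩ := (Finset.sum_pos_iff_of_nonneg hnonneg).1 h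
  refine ⟨w, hw, List.count_pos_iff.1 ?_⟩
  exact_mod_cast pos_of_mul_pos_right hpos (hRS.2.2.1 j w hw).le

lemma exists_mem_realsIter_of_substM_pow_pos (hRS : IsRandomSubstitution θ P) (k : ℕ) {i j : A}
    (h : 0 < (substM θ P ^ k) i j) : ∃ w ∈ realsIter θ k [j], i ∈ w := by
  induction k generalizing j with
  | zero =>
    obtain rfl : i = j := by by_contra hij; simp [hij] at h
    exact ⟨[i], mem_realsIter_zero.2 rfl, List.mem_singleton_self i⟩
  | succ k ih =>
    rw [pow_succ, Matrix.mul_apply] at h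
    obtain ⟨c, -, hc⟩ := (Finset.sum_pos_iff_of_nonneg fun c _ =>
      mul_nonneg (substM_pow_nonneg hRS k i c) (substM_nonneg hRS c j)).1 h
    obtain ⟨x, hx, hix⟩ := ih (pos_of_mul_pos_left hc (substM_nonneg hRS c j))
    obtain ⟨w, hw, hcw⟩ := exists_mem_of_substM_pos hRS
      (pos_of_mul_pos_right hc (substM_pow_nonneg hRS k i c))
    obtain ⟨s, t, rfl⟩ := List.append_of_mem hcw
    obtain ⟨S, T, -, -, hST⟩ := exists_append_mem_realsIter hRS.1 hRS.2.1 hx s t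
    exact ⟨_, mem_realsIter_succ.2 ⟨_, mem_reals_singleton.2 hw, hST⟩, by simp [hix]⟩

lemma exists_two_le_length [Nonempty A] (hRS : IsRandomSubstitution θ P)
    (hexp : IsExpanding θ P) : ∃ b, ∃ w ∈ θ b, 2 ≤ w.length := by
  by_contra! h
  obtain ⟨-, hθnil, -, -, hsum⟩ := hRS
  obtain ⟨lam, hlam, R, hR, hMR⟩ := hexp
  have hcol : ∀ j, ∑ i, substM θ P i j = 1 := by
    intro j
    rw [← hsum j]
    simp only [substM, Matrix.of_apply]
    rw [Finset.sum_comm]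
    refine Finset.sum_congr rfl fun w hw => ?_
    have hw₁ : w.length = 1 := by
      have := List.length_pos_iff.2 (hθnil j w hw)
      have := h j w hw
      omega
    have hcount : ∑ i, w.count i = w.length := by
      simpa using Multiset.sum_count_eq_card (s := Finset.univ) (m := (w : Multiset A)) (by simp)
    rw [← Finset.mul_sum, ← Nat.cast_sum, hcount, hw₁, Nat.cast_one, mul_one]
  have hRsum : ∑ i, (substM θ P).mulVec R i = ∑ j, R j := by
    simp only [Matrix.mulVec, dotProduct]
    rw [Finset.sum_comm]
    simp [← Finset.sum_mul, hcol]
  rw [hMR] at hRsum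
  simp only [Pi.smul_apply, smul_eq_mul, ← Finset.mul_sum] at hRsum
  nlinarith [Finset.sum_pos (fun i _ => hR i) Finset.univ_nonempty]

lemma exists_mem_realsIter_le_length (hRS : IsRandomSubstitution θ P) (hprim : IsPrimitive θ P)
    (hexp : IsExpanding θ P) (a : A) (n : ℕ) : ∃ N, ∃ w ∈ realsIter θ N [a], n ≤ w.length := by
  have : Nonempty A := ⟨a⟩
  obtain ⟨k₀, hk₀⟩ := hprim
  obtain ⟨b, w₀, hw₀, hlen₀⟩ := exists_two_le_length hRS hexp
  have hletter : ∀ c, ∃ w ∈ realsIter θ (k₀ + 1) [c], 2 ≤ w.length := by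
    intro c
    obtain ⟨x, hx, hbx⟩ := exists_mem_realsIter_of_substM_pow_pos hRS k₀ (hk₀ b c)
    obtain ⟨s, t, rfl⟩ := List.append_of_mem hbx
    obtain ⟨S, T, -, -, hST⟩ := exists_append_mem_realsIter hRS.1 hRS.2.1
      (mem_realsIter_one.2 hw₀) s t
    exact ⟨_, mem_realsIter_add.2 ⟨_, hx, hST⟩, by simp; omega⟩
  have hword : ∀ u : List A, ∃ w ∈ realsIter θ (k₀ + 1) u, 2 * u.length ≤ w.length := by
    intro u
    induction u with
    | nil =>
      obtain ⟨w, hw⟩ := realsIter_nonempty hRS.1 (k₀ + 1) []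
      exact ⟨w, hw, by simp⟩
    | cons c u ih =>
      obtain ⟨x, hx, hxlen⟩ := hletter c
      obtain ⟨w, hw, hwlen⟩ := ih
      exact ⟨x ++ w, mem_realsIter_append (u := [c]).2 ⟨x, hx, w, hw, rfl⟩, by simp; omega⟩
  have hiter : ∀ m, ∃ w ∈ realsIter θ (m * (k₀ + 1)) [a], 2 ^ m ≤ w.length := by
    intro m
    induction m with
    | zero => exact ⟨[a], by simp [mem_realsIter_zero], by simp⟩
    | succ m ih =>
      obtain ⟨w, hw, hwlen⟩ := ih
      obtain ⟨w', hw', hw'len⟩ := hword w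
      exact ⟨w', by rw [Nat.succ_mul]; exact mem_realsIter_add.2 ⟨w, hw, hw'⟩,
        by rw [pow_succ]; omega⟩
  obtain ⟨w, hw, hlen⟩ := hiter n
  exact ⟨_, w, hw, Nat.lt_two_pow_self.le.trans hlen⟩

lemma exists_legal_append_cons (hRS : IsRandomSubstitution θ P) (hprim : IsPrimitive θ P)
    (hexp : IsExpanding θ P) (a : A) (n : ℕ) :
    ∃ x y : List A, x.length = n ∧ y.length = n ∧ Legal θ (x ++ a :: y) := by
  obtain ⟨N, w, hw, hlen⟩ := exists_mem_realsIter_le_length hRS hprim hexp a (2 * n + 1)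
  have hsplit : w = w.take n ++ w[n] :: w.drop (n + 1) := by simp
  obtain ⟨k₀, hk₀⟩ := hprim
  obtain ⟨z, hz, haz⟩ := exists_mem_realsIter_of_substM_pow_pos hRS k₀ (hk₀ a w[n])
  obtain ⟨S, T, hS, hT, hST⟩ := exists_append_mem_realsIter hRS.1 hRS.2.1 hz
    (w.take n) (w.drop (n + 1))
  rw [← hsplit] at hST
  have hlegal := legal_of_mem_realsIter (mem_realsIter_add.2 ⟨w, hw, hST⟩)
  obtain ⟨z₁, z₂, rfl⟩ := List.append_of_mem haz
  simp only [List.length_take, List.length_drop] at hS hT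
  refine ⟨(S ++ z₁).drop ((S ++ z₁).length - n), (z₂ ++ T).take n, by simp; omega,
    by simp; omega, hlegal.of_infix ⟨(S ++ z₁).take ((S ++ z₁).length - n), (z₂ ++ T).drop n, ?_⟩⟩
  simp only [List.append_assoc, List.cons_append, List.take_append_drop]
  rw [← List.append_assoc, List.take_append_drop]
  simp

end Primitivity

lemma exists_mem_Xtheta_apply_zero_eq {θ : A → Finset (List A)} {a : A}
    (h : ∀ n, ∃ x y : List A, x.length = n ∧ y.length = n ∧ Legal θ (x ++ a :: y)) :
    ∃ y ∈ Xtheta θ, y 0 = a := by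
  let _ : TopologicalSpace A := ⊥
  have : DiscreteTopology A := ⟨rfl⟩
  let K : ℕ → Set (ℤ → A) := fun n => {y | y 0 = a ∧ Legal θ (window y (-n) (2 * n + 1))}
  have hclosed : ∀ n, IsClosed (K n) := by
    intro n
    show IsClosed ({y | y 0 = a} ∩ {y | Legal θ (window y (-n) (2 * n + 1))})
    refine (isClosed_eq (continuous_apply 0) continuous_const).inter ?_
    have hcont : Continuous fun (y : ℤ → A) (i : Fin (2 * n + 1)) => y (-n + i) :=
      continuous_pi fun i => continuous_apply _
    simp only [window_eq_ofFn]
    exact (isClosed_discrete {f | Legal θ (List.ofFn f)}).preimage hcont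
  have hanti : ∀ n, K (n + 1) ⊆ K n := fun n y ⟨h0, hy⟩ =>
    ⟨h0, hy.of_infix (window_infix y (by omega) (by omega))⟩
  have hne : ∀ n, (K n).Nonempty := by
    intro n
    obtain ⟨x, z, hx, hz, hlegal⟩ := h n
    refine ⟨fun t => (x ++ a :: z).getD (t + n).toNat a, by simp [hx], ?_⟩
    convert hlegal
    apply List.ext_getElem (by simp [hx, hz]; omega)
    intro i hi hi'
    rw [getElem_window, show (-(n : ℤ) + i + n).toNat = i by omega, List.getD_eq_getElem _ _ hi']
  obtain ⟨y, hy⟩ := IsCompact.nonempty_iInter_of_sequence_nonempty_isCompact_isClosed K hanti hne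
    (hclosed 0).isCompact hclosed
  rw [Set.mem_iInter] at hy
  exact ⟨y, fun m L => (hy (m.natAbs + L)).2.of_infix (window_infix y (by omega) (by omega)),
    (hy 0).1⟩

theorem statement15 {A : Type*} [Fintype A] [DecidableEq A]
    (θ : A → Finset (List A)) (P : A → List A → ℝ)
    (hRS : IsRandomSubstitution θ P) (hprim : IsPrimitive θ P) (hexp : IsExpanding θ P)
    (hlen : ∀ a : A, ∀ u ∈ θ a, ∀ v ∈ θ a, u.length = v.length)
    (hrec : Recognisable θ) :
    DisjointSetCondition θ := by
  intro a k
  have : Inhabited A := ⟨a⟩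
  have hθ := hRS.1
  have hθnil := hRS.2.1
  obtain ⟨y, hy, rfl⟩ := exists_mem_Xtheta_apply_zero_eq (exists_legal_append_cons hRS hprim hexp a)
  choose V hV using fun j => hθ (y j)
  choose R hR using fun j => realsIter_nonempty hθ k (V j)
  have key : ∀ u ∈ θ (y 0), ∀ w ∈ realsIter θ k u,
      glue (Function.update V 0 u) ∈ Xtheta θ ∧
      glue (Function.update R 0 w) ∈ substSeqPow θ k (glue (Function.update V 0 u)) ∧
      window (glue (Function.update V 0 u)) 0 u.length = u := by
    intro u hu w hwu
    have hVu : ∀ j, Function.update V 0 u j ∈ θ (y j) := by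
      intro j
      by_cases hj : j = 0 <;> simp [hj, hu, hV]
    have hne : ∀ j, Function.update V 0 u j ≠ [] := fun j => hθnil _ _ (hVu j)
    refine ⟨mem_Xtheta_of_mem_substSeq hθ hθnil hy ((mem_substSeq_iff hθnil).2 ⟨_, hVu, rfl⟩),
      glue_mem_substSeqPow hθnil k hne fun j => ?_, by simpa using (eq_glue_iff hne).1 rfl 0⟩
    by_cases hj : j = 0 <;> simp [hj, hwu, hR]
  intro u hu v hv huv w hwu hwv
  obtain ⟨hz₁, hx₁, hu₁⟩ := key u hu w hwu
  obtain ⟨hz₂, hx₂, hv₂⟩ := key v hv w hwv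
  rw [hrec.eq_of_mem_substSeqPow hθ hθnil k hz₁ hz₂ hx₁ hx₂, hlen _ u hu v hv, hv₂] at hu₁
  exact huv hu₁.symm

end RandomSubstitutionTheory
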